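/- Min-plus analogue of the superset algorithm: over the tropical semiring (min, +) on [0, ∞], define the sequence T_0 = t̃, T_{m+1} = min(T_m, T_m ⊗ p ⊗ T_m) where ⊗ is (min,+) matrix multiplication with fixed propagation-delay matrix p. Then T_m is nonincreasing, T_m ≤ t̃, and for m ≥ ⌈log₂ n⌉ with n = min(n_u, n_y), T_m = T_{m+1} and T_m satisfies the QI condition (T_m ⊗ p ⊗ T_m) ≥ T_m entrywise; moreover T_m is the entrywise largest matrix T ≤ t̃ satisfying T ⊗ p ⊗ T ≥ T. -/

import Mathlib

open ENNReal

/-- Tropical (min,+) matrix multiplication on [0,∞]. -/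
noncomputable def tmul {a b c : ℕ} (A : Matrix (Fin a) (Fin b) ℝ≥0∞) (B : Matrix (Fin b) (Fin c) ℝ≥0∞) :
    Matrix (Fin a) (Fin c) ℝ≥0∞ :=
  fun k l => ⨅ j, (A k j + B j l)

/-- Entrywise minimum of matrices. -/
def tmin {a b : ℕ} (A B : Matrix (Fin a) (Fin b) ℝ≥0∞) : Matrix (Fin a) (Fin b) ℝ≥0∞ :=
  fun i j => min (A i j) (B i j)

/-- The sequence T_0 = t̃, T_{m+1} = min(T_m, T_m ⊗ p ⊗ T_m). -/
noncomputable def Tseq {nu ny : ℕ} (tt : Matrix (Fin nu) (Fin ny) ℝ≥0∞)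
    (p : Matrix (Fin ny) (Fin nu) ℝ≥0∞) : ℕ → Matrix (Fin nu) (Fin ny) ℝ≥0∞
  | 0 => tt
  | m + 1 => tmin (Tseq tt p m) (tmul (tmul (Tseq tt p m) p) (Tseq tt p m))

/-!
Write `W k = t̃ ⊗ (p ⊗ t̃)^k` (`chainProd`) and `W* = min_k W k` (`chainInf`). Since
`W a ⊗ p ⊗ W b = W (a + b + 1)`, induction gives `T_m ≤ W k` for every `k < 2^m`. On the other
hand `W* ≤ t̃` and `W* ≤ W* ⊗ p ⊗ W*`, and every such matrix stays below every `T_m`, because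
`T ↦ T ⊗ p ⊗ T` is monotone. Finally, as all delays are nonnegative, a cheapest walk with at least
`N` steps in a digraph on `N` vertices contains a cycle whose removal does not increase its cost,
so `W*` is already the minimum over `k < n ≤ 2^m`. Hence `T_m = W*` as soon as `m ≥ ⌈log₂ n⌉`.
-/

noncomputable def tId (N : ℕ) : Matrix (Fin N) (Fin N) ℝ≥0∞ :=
  fun i j => if i = j then 0 else ⊤

noncomputable def tpow {N : ℕ} (A : Matrix (Fin N) (Fin N) ℝ≥0∞) :
    ℕ → Matrix (Fin N) (Fin N) ℝ≥0∞
  | 0 => tId N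
  | k + 1 => tmul (tpow A k) A

section TropicalMatrix

variable {a b c d : ℕ}

theorem tId_tmul (B : Matrix (Fin a) (Fin b) ℝ≥0∞) : tmul (tId a) B = B := by
  funext i l
  refine le_antisymm ((iInf_le _ i).trans (by simp [tId])) (le_iInf fun j => ?_)
  rcases eq_or_ne i j with rfl | h <;> simp [tId, *]

theorem tmul_tId (A : Matrix (Fin a) (Fin b) ℝ≥0∞) : tmul A (tId b) = A := by
  funext i l
  refine le_antisymm ((iInf_le _ l).trans (by simp [tId])) (le_iInf fun j => ?_)
  rcases eq_or_ne j l with rfl | h <;> simp [tId, *]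

theorem tmul_assoc (A : Matrix (Fin a) (Fin b) ℝ≥0∞) (B : Matrix (Fin b) (Fin c) ℝ≥0∞)
    (C : Matrix (Fin c) (Fin d) ℝ≥0∞) : tmul (tmul A B) C = tmul A (tmul B C) := by
  funext i l
  change ⨅ k, ((⨅ j, A i j + B j k) + C k l) = ⨅ j, (A i j + ⨅ k, (B j k + C k l))
  simp only [ENNReal.iInf_add, ENNReal.add_iInf, add_assoc]
  exact iInf_comm

theorem tmul_le_tmul {A A' : Matrix (Fin a) (Fin b) ℝ≥0∞} {B B' : Matrix (Fin b) (Fin c) ℝ≥0∞}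
    (hA : ∀ i j, A i j ≤ A' i j) (hB : ∀ i j, B i j ≤ B' i j) (i : Fin a) (l : Fin c) :
    tmul A B i l ≤ tmul A' B' i l :=
  iInf_mono fun _ => add_le_add (hA _ _) (hB _ _)

theorem tmul_tmul_le_tmul_tmul {A A' : Matrix (Fin a) (Fin b) ℝ≥0∞}
    (P : Matrix (Fin b) (Fin c) ℝ≥0∞) {B B' : Matrix (Fin c) (Fin d) ℝ≥0∞}
    (hA : ∀ i j, A i j ≤ A' i j) (hB : ∀ i j, B i j ≤ B' i j) (i : Fin a) (l : Fin d) : tmul (tmul A P) B i l ≤ tmul (tmul A' P) B' i l :=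
  tmul_le_tmul (tmul_le_tmul hA fun _ _ => le_rfl) hB i l

theorem tmul_iInf_left {ι : Sort*} (f : ι → Matrix (Fin a) (Fin b) ℝ≥0∞)
    (B : Matrix (Fin b) (Fin c) ℝ≥0∞) (i : Fin a) (l : Fin c) :
    tmul (fun i j => ⨅ x, f x i j) B i l = ⨅ x, tmul (f x) B i l := by
  change ⨅ j, ((⨅ x, f x i j) + B j l) = _
  simp only [ENNReal.iInf_add]
  exact iInf_comm

theorem tmul_iInf_right {ι : Sort*} (A : Matrix (Fin a) (Fin b) ℝ≥0∞)
    (f : ι → Matrix (Fin b) (Fin c) ℝ≥0∞) (i : Fin a) (l : Fin c) :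
    tmul A (fun i j => ⨅ x, f x i j) i l = ⨅ x, tmul A (f x) i l := by
  change ⨅ j, (A i j + ⨅ x, f x j l) = _
  simp only [ENNReal.add_iInf]
  exact iInf_comm

theorem tpow_add (A : Matrix (Fin a) (Fin a) ℝ≥0∞) (m n : ℕ) :
    tpow A (m + n) = tmul (tpow A m) (tpow A n) := by
  induction n with
  | zero => exact (tmul_tId _).symm
  | succ n ih =>
    change tmul (tpow A (m + n)) A = tmul (tpow A m) (tmul (tpow A n) A)
    rw [ih, tmul_assoc]

theorem tpow_add_apply_le (A : Matrix (Fin a) (Fin a) ℝ≥0∞) (m n : ℕ) (i x j : Fin a) :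
    tpow A (m + n) i j ≤ tpow A m i x + tpow A n x j := by
  rw [tpow_add]
  exact iInf_le _ x

theorem tpow_tmul_comm (X : Matrix (Fin a) (Fin b) ℝ≥0∞) (Y : Matrix (Fin b) (Fin a) ℝ≥0∞)
    (k : ℕ) : tmul (tpow (tmul X Y) k) X = tmul X (tpow (tmul Y X) k) := by
  induction k with
  | zero => exact (tId_tmul X).trans (tmul_tId X).symm
  | succ k ih =>
    change tmul (tmul (tpow (tmul X Y) k) (tmul X Y)) X
      = tmul X (tmul (tpow (tmul Y X) k) (tmul Y X))
    rw [← tmul_assoc X, ← ih]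
    simp only [tmul_assoc]

end TropicalMatrix

section Walks

variable {N : ℕ} (A : Matrix (Fin N) (Fin N) ℝ≥0∞)

noncomputable def walkCost (v : ℕ → Fin N) (k : ℕ) : ℝ≥0∞ :=
  ∑ s ∈ Finset.range k, A (v s) (v (s + 1))

theorem walkCost_add (v : ℕ → Fin N) (m n : ℕ) :
    walkCost A v (m + n) = walkCost A v m + walkCost A (fun s => v (m + s)) n :=
  Finset.sum_range_add _ _ _

theorem tpow_le_walkCost (v : ℕ → Fin N) (k : ℕ) :
    tpow A k (v 0) (v k) ≤ walkCost A v k := by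
  induction k with
  | zero => simp [tpow, tId, walkCost]
  | succ k ih =>
    calc tpow A (k + 1) (v 0) (v (k + 1)) ≤ tpow A k (v 0) (v k) + A (v k) (v (k + 1)) :=
          iInf_le _ (v k)
      _ ≤ walkCost A v k + A (v k) (v (k + 1)) := by gcongr
      _ = walkCost A v (k + 1) := (Finset.sum_range_succ _ _).symm

theorem exists_walkCost_le (k : ℕ) (i j : Fin N) :
    ∃ v : ℕ → Fin N, v 0 = i ∧ v (k + 1) = j ∧ walkCost A v (k + 1) ≤ tpow A (k + 1) i j := by
  induction k generalizing j with
  | zero =>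
    refine ⟨fun s => if s = 0 then i else j, rfl, rfl, ?_⟩
    simp [walkCost, tpow, tId_tmul]
  | succ k ih =>
    have : Nonempty (Fin N) := ⟨i⟩
    obtain ⟨m, hm⟩ := exists_eq_ciInf_of_finite (f := fun m => tpow A (k + 1) i m + A m j)
    obtain ⟨v, hv0, hvm, hv⟩ := ih m
    set w : ℕ → Fin N := fun s => if s ≤ k + 1 then v s else j
    have hprefix : walkCost A w (k + 1) = walkCost A v (k + 1) :=
      Finset.sum_congr rfl fun s hs => by
        have := Finset.mem_range.1 hs
        simp only [w, if_pos (by omega : s ≤ k + 1), if_pos (by omega : s + 1 ≤ k + 1)]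
    refine ⟨w, by simp [w, hv0], by simp [w], ?_⟩
    calc walkCost A w (k + 2) = walkCost A v (k + 1) + A m j := by
          rw [walkCost, Finset.sum_range_succ, ← walkCost, hprefix]
          simp [w, hvm]
      _ ≤ tpow A (k + 1) i m + A m j := by gcongr
      _ = tpow A (k + 2) i j := hm

theorem exists_lt_le_map_eq (v : ℕ → Fin N) {K : ℕ} (hK : N ≤ K) :
    ∃ a b, a < b ∧ b ≤ K ∧ v a = v b := by
  obtain ⟨x, y, hxy, hv⟩ :=
    Fintype.exists_ne_map_eq_of_card_lt (fun s : Fin (K + 1) => v s) (by simp; omega)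
  rcases lt_or_gt_of_ne hxy with h | h
  · exact ⟨x, y, h, Nat.lt_succ_iff.mp y.isLt, hv⟩
  · exact ⟨y, x, h, Nat.lt_succ_iff.mp x.isLt, hv.symm⟩

theorem iInf_tpow_le (K : ℕ) (i j : Fin N) : ⨅ k : Fin N, tpow A k i j ≤ tpow A K i j := by
  induction K using Nat.strong_induction_on generalizing i j with
  | _ K ih =>
  rcases lt_or_ge K N with hK | hK
  · exact iInf_le (fun k : Fin N => tpow A k i j) ⟨K, hK⟩
  obtain ⟨K, rfl⟩ : ∃ K', K = K' + 1 :=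
    Nat.exists_eq_succ_of_ne_zero (by have := i.pos; omega)
  obtain ⟨v, rfl, rfl, hv⟩ := exists_walkCost_le A K i j
  obtain ⟨a, b, hab, hbK, hvab⟩ := exists_lt_le_map_eq v hK
  obtain ⟨d, rfl⟩ := Nat.exists_eq_add_of_le hab.le
  obtain ⟨e, he⟩ := Nat.exists_eq_add_of_le hbK
  -- cut out the closed walk from step `a` to step `a + d`
  have hcut : tpow A (a + e) (v 0) (v (K + 1)) ≤ walkCost A v (K + 1) :=
    calc tpow A (a + e) (v 0) (v (K + 1))
        ≤ tpow A a (v 0) (v a) + tpow A e (v (a + d)) (v (a + d + e)) := by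
          rw [← hvab, ← he]; exact tpow_add_apply_le A a e _ _ _
      _ ≤ walkCost A v a + walkCost A (fun s => v (a + d + s)) e :=
          add_le_add (tpow_le_walkCost A v a) (tpow_le_walkCost A (fun s => v (a + d + s)) e)
      _ ≤ walkCost A v a + walkCost A (fun s => v (a + s)) d
            + walkCost A (fun s => v (a + d + s)) e := by gcongr; exact le_self_add
      _ = walkCost A v (K + 1) := by rw [he, walkCost_add, walkCost_add, add_assoc]
  exact (ih (a + e) (by omega) _ _).trans (hcut.trans hv)

end Walks

section Superset

variable {nu ny : ℕ} (tt : Matrix (Fin nu) (Fin ny) ℝ≥0∞) (p : Matrix (Fin ny) (Fin nu) ℝ≥0∞)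

theorem Tseq_succ_le (m : ℕ) (i : Fin nu) (j : Fin ny) :
    Tseq tt p (m + 1) i j ≤ Tseq tt p m i j :=
  min_le_left _ _

theorem Tseq_le (m : ℕ) (i : Fin nu) (j : Fin ny) : Tseq tt p m i j ≤ tt i j := by
  induction m with
  | zero => exact le_rfl
  | succ m ih => exact (Tseq_succ_le tt p m i j).trans ih

theorem le_Tseq {T : Matrix (Fin nu) (Fin ny) ℝ≥0∞} (hT : ∀ i j, T i j ≤ tt i j)
    (hTpT : ∀ i j, T i j ≤ tmul (tmul T p) T i j) (m : ℕ) (i : Fin nu) (j : Fin ny) :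
    T i j ≤ Tseq tt p m i j := by
  induction m generalizing i j with
  | zero => exact hT i j
  | succ m ih => exact le_min (ih i j) ((hTpT i j).trans (tmul_tmul_le_tmul_tmul p ih ih i j))

noncomputable def chainProd (k : ℕ) : Matrix (Fin nu) (Fin ny) ℝ≥0∞ :=
  tmul (tpow (tmul tt p) k) tt

theorem chainProd_zero : chainProd tt p 0 = tt :=
  tId_tmul tt

theorem tmul_chainProd (a b : ℕ) :
    tmul (tmul (chainProd tt p a) p) (chainProd tt p b) = chainProd tt p (a + b + 1) := by
  rw [chainProd, chainProd, chainProd, add_right_comm, tpow_add]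
  change _ = tmul (tmul (tmul (tpow (tmul tt p) a) (tmul tt p)) (tpow (tmul tt p) b)) tt
  simp only [tmul_assoc]

theorem Tseq_le_chainProd (m : ℕ) {k : ℕ} (hk : k < 2 ^ m) (i : Fin nu) (j : Fin ny) :
    Tseq tt p m i j ≤ chainProd tt p k i j := by
  induction m generalizing k i j with
  | zero =>
    obtain rfl : k = 0 := by omega
    rw [chainProd_zero]
    exact le_rfl
  | succ m ih =>
    rcases lt_or_ge k (2 ^ m) with hk' | hk'
    · exact (Tseq_succ_le tt p m i j).trans (ih hk' i j)
    have hsplit : k = (2 ^ m - 1) + (k - 2 ^ m) + 1 := by omega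
    rw [hsplit, ← tmul_chainProd]
    exact (min_le_right _ _).trans
      (tmul_tmul_le_tmul_tmul p (ih (by omega)) (ih (by rw [pow_succ] at hk; omega)) i j)

theorem iInf_chainProd_le (K : ℕ) (i : Fin nu) (j : Fin ny) :
    ⨅ k : Fin (min nu ny), chainProd tt p k i j ≤ chainProd tt p K i j := by
  rcases min_choice nu ny with h | h <;> rw [h]
  · calc ⨅ k : Fin nu, chainProd tt p k i j
        = tmul (fun i i' => ⨅ k : Fin nu, tpow (tmul tt p) k i i') tt i j :=
          (tmul_iInf_left _ tt i j).symm
      _ ≤ chainProd tt p K i j :=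
          tmul_le_tmul (fun i i' => iInf_tpow_le _ K i i') (fun _ _ => le_rfl) i j
  · simp only [chainProd, tpow_tmul_comm]
    calc ⨅ k : Fin ny, tmul tt (tpow (tmul p tt) k) i j
        = tmul tt (fun j' j => ⨅ k : Fin ny, tpow (tmul p tt) k j' j) i j :=
          (tmul_iInf_right tt _ i j).symm
      _ ≤ tmul tt (tpow (tmul p tt) K) i j :=
          tmul_le_tmul (fun _ _ => le_rfl) (fun j' j => iInf_tpow_le _ K j' j) i j

noncomputable def chainInf : Matrix (Fin nu) (Fin ny) ℝ≥0∞ :=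
  fun i j => ⨅ k, chainProd tt p k i j

theorem chainInf_le_tt (i : Fin nu) (j : Fin ny) : chainInf tt p i j ≤ tt i j :=
  (iInf_le (fun k => chainProd tt p k i j) 0).trans_eq (by rw [chainProd_zero])

theorem chainInf_le_tmul (i : Fin nu) (j : Fin ny) :
    chainInf tt p i j ≤ tmul (tmul (chainInf tt p) p) (chainInf tt p) i j := by
  have hleft : tmul (chainInf tt p) p = fun i j => ⨅ a, tmul (chainProd tt p a) p i j :=
    funext₂ (tmul_iInf_left _ p)
  have hprod : tmul (tmul (chainInf tt p) p) (chainInf tt p) i j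
      = ⨅ a, ⨅ b, chainProd tt p (a + b + 1) i j := by
    rw [hleft, tmul_iInf_left]
    simp only [← tmul_chainProd]
    exact iInf_congr fun a => tmul_iInf_right _ (chainProd tt p) i j
  rw [hprod]
  exact le_iInf₂ fun a b => iInf_le _ _

theorem Tseq_eq_chainInf {m : ℕ} (hm : min nu ny ≤ 2 ^ m) : Tseq tt p m = chainInf tt p := by
  funext i j
  refine le_antisymm (le_iInf fun K => ?_) (le_Tseq tt p (chainInf_le_tt tt p)
    (chainInf_le_tmul tt p) m i j)
  exact (le_iInf fun k : Fin (min nu ny) => Tseq_le_chainProd tt p m (by omega) i j).trans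
    (iInf_chainProd_le tt p K i j)

end Superset

theorem stmt17_general {nu ny : ℕ}
    (tt : Matrix (Fin nu) (Fin ny) ℝ≥0∞) (p : Matrix (Fin ny) (Fin nu) ℝ≥0∞) :
    (∀ (m : ℕ) (i : Fin nu) (j : Fin ny), Tseq tt p (m + 1) i j ≤ Tseq tt p m i j) ∧
    (∀ (m : ℕ) (i : Fin nu) (j : Fin ny), Tseq tt p m i j ≤ tt i j) ∧
    (∀ m : ℕ, Nat.clog 2 (min nu ny) ≤ m →
      Tseq tt p m = Tseq tt p (m + 1) ∧
      (∀ i j, Tseq tt p m i j ≤ tmul (tmul (Tseq tt p m) p) (Tseq tt p m) i j) ∧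
      (∀ T : Matrix (Fin nu) (Fin ny) ℝ≥0∞,
        (∀ i j, T i j ≤ tt i j) → (∀ i j, T i j ≤ tmul (tmul T p) T i j) →
        ∀ i j, T i j ≤ Tseq tt p m i j)) := by
  have hstable (m : ℕ) (hm : Nat.clog 2 (min nu ny) ≤ m) : Tseq tt p m = chainInf tt p :=
    Tseq_eq_chainInf tt p <|
      (Nat.le_pow_clog one_lt_two _).trans (Nat.pow_le_pow_right two_pos hm)
  refine ⟨Tseq_succ_le tt p, Tseq_le tt p, fun m hm =>
    ⟨?_, ?_, fun T hT hTpT => le_Tseq tt p hT hTpT m⟩⟩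
  · rw [hstable m hm, hstable (m + 1) (by omega)]
  · rw [hstable m hm]
    exact chainInf_le_tmul tt p

theorem stmt17 {nu ny : ℕ} (hn : 1 ≤ min nu ny)
    (tt : Matrix (Fin nu) (Fin ny) ℝ≥0∞) (p : Matrix (Fin ny) (Fin nu) ℝ≥0∞) :
    (∀ (m : ℕ) (i : Fin nu) (j : Fin ny), Tseq tt p (m + 1) i j ≤ Tseq tt p m i j) ∧
    (∀ (m : ℕ) (i : Fin nu) (j : Fin ny), Tseq tt p m i j ≤ tt i j) ∧
    (∀ m : ℕ, Nat.clog 2 (min nu ny) ≤ m →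
      Tseq tt p m = Tseq tt p (m + 1) ∧
      (∀ i j, Tseq tt p m i j ≤ tmul (tmul (Tseq tt p m) p) (Tseq tt p m) i j) ∧
      (∀ T : Matrix (Fin nu) (Fin ny) ℝ≥0∞,
        (∀ i j, T i j ≤ tt i j) → (∀ i j, T i j ≤ tmul (tmul T p) T i j) →
        ∀ i j, T i j ≤ Tseq tt p m i j)) :=
  stmt17_general tt p
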